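/- Every recognizable birecurrent set S ⊆ A* is completely reducible over ℚ, i.e. the syntactic representation of its characteristic series is a direct sum of irreducible representations. -/

import Mathlib

namespace Birec

variable {A : Type*}

/-- The left quotient `u⁻¹S = {v | u v ∈ S}`. -/
def leftQuot (S : Set (List A)) (u : List A) : Set (List A) := {v | u ++ v ∈ S}

/-- A language is recognizable iff it has finitely many left quotients (Nerode). -/
def Recognizable (S : Set (List A)) : Prop := (Set.range (leftQuot S)).Finite

/-- The reversal `S̃` of a language. -/
def langRev (S : Set (List A)) : Set (List A) := {w | w.reverse ∈ S}

/-- A recognizable set is recurrent if its minimal automaton (whose states are the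
nonempty left quotients) is strongly connected. -/
def Recurrent (S : Set (List A)) : Prop :=
  Recognizable S ∧
    ∀ u v : List A, (leftQuot S u).Nonempty → (leftQuot S v).Nonempty →
      ∃ w : List A, leftQuot S (u ++ w) = leftQuot S v

/-- A set is birecurrent if it is recurrent together with its reversal. -/
def Birecurrent (S : Set (List A)) : Prop := Recurrent S ∧ Recurrent (langRev S)

/-- A set is dense if every word is a factor of one of its words. -/
def LangDense (S : Set (List A)) : Prop := ∀ v : List A, ∃ u w : List A, u ++ v ++ w ∈ S

end Birec
namespace Birec

variable {A : Type*}

/-- The characteristic series of a language, as a function `A* → ℚ`. -/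
noncomputable def charFun (S : Set (List A)) : List A → ℚ := S.indicator 1

/-- The shift operator `τ ↦ τ · u`, where `(τ · u)(v) = τ(u v)`; this is the linear
action underlying the syntactic representation. -/
def shiftOp (u : List A) : (List A → ℚ) →ₗ[ℚ] (List A → ℚ) where
  toFun τ := fun v => τ (u ++ v)
  map_add' := fun _ _ => rfl
  map_smul' := fun _ _ => rfl

/-- The syntactic space of a series `σ`: the subspace of `ℚ⟨⟨A⟩⟩` spanned by the
series `σ · u` for `u ∈ A*`. -/
def synSpace (σ : List A → ℚ) : Submodule ℚ (List A → ℚ) :=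
  Submodule.span ℚ (Set.range fun u : List A => shiftOp u σ)

/-- A subspace is invariant if it is stable under all shift operators. -/
def InvariantSub (W : Submodule ℚ (List A → ℚ)) : Prop :=
  ∀ τ ∈ W, ∀ u : List A, shiftOp u τ ∈ W

/-- An invariant subspace is irreducible if it is nonzero and has no nontrivial
invariant subspace. -/
def IrreducibleSub (W : Submodule ℚ (List A → ℚ)) : Prop :=
  W ≠ ⊥ ∧ ∀ W' : Submodule ℚ (List A → ℚ), W' ≤ W → InvariantSub W' → W' = ⊥ ∨ W' = W

/-- A series is completely reducible if its syntactic space is a direct sum of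
invariant irreducible subspaces (equivalently, its syntactic representation is a
direct sum of irreducible representations). -/
def CompletelyReducibleSeries (σ : List A → ℚ) : Prop :=
  ∃ (n : ℕ) (W : Fin n → Submodule ℚ (List A → ℚ)),
    (∀ i, W i ≤ synSpace σ ∧ InvariantSub (W i) ∧ IrreducibleSub (W i)) ∧
    iSupIndep W ∧ (⨆ i, W i) = synSpace σ

/-- A language is completely reducible if its characteristic series is. -/
noncomputable def CompletelyReducibleLang (S : Set (List A)) : Prop :=
  CompletelyReducibleSeries (charFun S)

/-- The rank of the element `ψ_σ(u)` of the syntactic monoid, i.e. the dimension of the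
image of the syntactic space under the shift by `u`. -/
noncomputable def psiRank (σ : List A → ℚ) (u : List A) : ℕ :=
  Module.finrank ℚ ↥(Submodule.map (shiftOp u) (synSpace σ))

/-- `u` induces an element of minimal nonzero rank of the syntactic monoid. -/
def IsMinNonzeroPsiRank (σ : List A → ℚ) (u : List A) : Prop :=
  psiRank σ u ≠ 0 ∧ ∀ v : List A, psiRank σ v ≠ 0 → psiRank σ u ≤ psiRank σ v

/-- The eventual kernel `EK(S)`: the intersection (inside the syntactic space) of the
kernels of all elements of minimal nonzero rank of the syntactic monoid. -/
noncomputable def EK (S : Set (List A)) : Submodule ℚ (List A → ℚ) :=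
  synSpace (charFun S) ⊓
    ⨅ u ∈ {u : List A | IsMinNonzeroPsiRank (charFun S) u}, LinearMap.ker (shiftOp u)

/-- The eventual range `ER(S)`: the subspace spanned by the images of all elements of
minimal nonzero rank of the syntactic monoid. -/
noncomputable def ER (S : Set (List A)) : Submodule ℚ (List A → ℚ) :=
  ⨆ u ∈ {u : List A | IsMinNonzeroPsiRank (charFun S) u},
    Submodule.map (shiftOp u) (synSpace (charFun S))

end Birec

/-!
The syntactic space `V` is finite-dimensional and the monoid `M = ψ_σ(A*) ⊆ End V` is finite,
because `S` has finitely many left quotients. Recurrence of `S` yields an idempotent `e ∈ M` of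
minimal nonzero rank. By minimality every nonzero `x ↦ e (m x)` (`m ∈ M`) is invertible on
`W = e V`, so these maps form a finite group and, by Maschke's theorem, every stable subspace of `W`
has a stable complement. Recurrence of `S` also gives `V = M W`, and recurrence of `S̃` shows that
every `x ≠ 0` has some `m ∈ M` with `e (m x) ≠ 0`, i.e. an invariant subspace killed by `e` is
zero. Hence if `U` is invariant and `Y'` is a stable complement of `e U` in `W`, the invariant
subspace generated by `Y'` is a complement of `U`; complete reducibility follows by induction on
the dimension.
-/

namespace Birec

theorem exists_pow_isIdempotentElem {G : Type*} [Monoid G] [Finite G] (x : G) :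
    ∃ n ≠ 0, IsIdempotentElem (x ^ n) := by
  obtain ⟨i, j, hij, hpow⟩ := Finite.exists_ne_map_eq_of_infinite (x ^ · : ℕ → G)
  wlog hlt : i < j generalizing i j
  · exact this j i hij.symm hpow.symm (lt_of_le_of_ne (not_lt.mp hlt) hij.symm)
  have hstep : ∀ k, i ≤ k → x ^ (k + (j - i)) = x ^ k := fun k hk => by
    calc x ^ (k + (j - i)) = x ^ (k - i) * x ^ j := by rw [← pow_add]; congr 1; omega
      _ = x ^ k := by rw [← hpow, ← pow_add]; congr 1; omega
  have hper : ∀ t k, i ≤ k → x ^ (k + t * (j - i)) = x ^ k := by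
    intro t
    induction t with
    | zero => simp
    | succ t ih =>
      intro k hk
      rw [add_mul, one_mul, ← add_assoc, hstep _ (by omega), ih k hk]
  have hi : i ≤ (i + 1) * (j - i) := (Nat.le_succ i).trans (Nat.le_mul_of_pos_right _ (by omega))
  refine ⟨(i + 1) * (j - i), Nat.mul_ne_zero (by omega) (by omega), ?_⟩
  rw [IsIdempotentElem, ← pow_add, hper _ _ hi]

theorem Submonoid.inv_mem_of_finite {G : Type*} [Group G] (S : Submonoid G)
    (hS : (S : Set G).Finite) {x : G} (hx : x ∈ S) : x⁻¹ ∈ S := by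
  have hx' : IsOfFinOrder x := finite_powers.mp (hS.subset (Submonoid.powers_le.mpr hx))
  obtain ⟨n, hn⟩ := hx'.mem_powers_iff_mem_zpowers.mpr (inv_mem (Subgroup.mem_zpowers x))
  exact hn ▸ pow_mem hx n

section Invariant

variable {R V : Type*} [Semiring R] [AddCommMonoid V] [Module R V]

def jointInvtSubmodule (T : Set (Module.End R V)) : Sublattice (Submodule R V) :=
  ⨅ f ∈ T, Module.End.invtSubmodule f

theorem mem_jointInvtSubmodule {T : Set (Module.End R V)} {p : Submodule R V} :
    p ∈ jointInvtSubmodule T ↔ ∀ f ∈ T, ∀ x ∈ p, f x ∈ p := by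
  simp only [jointInvtSubmodule, Sublattice.mem_iInf,
    Module.End.mem_invtSubmodule_iff_forall_mem_of_mem]

def invtSpan (T : Set (Module.End R V)) (p : Submodule R V) : Submodule R V :=
  ⨆ f ∈ T, p.map f

variable {M : Submonoid (Module.End R V)}

theorem map_le_invtSpan (p : Submodule R V) {m : Module.End R V} (hm : m ∈ M) :
    p.map m ≤ invtSpan M p :=
  le_iSup₂_of_le (f := fun f (_ : f ∈ M) => p.map f) m hm le_rfl

theorem le_invtSpan (p : Submodule R V) : p ≤ invtSpan M p := by
  simpa [Module.End.one_eq_id] using map_le_invtSpan p M.one_mem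

theorem invtSpan_mem (p : Submodule R V) : invtSpan M p ∈ jointInvtSubmodule M := by
  refine mem_jointInvtSubmodule.mpr fun m hm x hx => ?_
  suffices invtSpan M p ≤ (invtSpan M p).comap m from this hx
  refine iSup₂_le fun f hf => ?_
  rw [← Submodule.map_le_iff_le_comap, ← Submodule.map_comp, ← Module.End.mul_eq_comp]
  exact map_le_invtSpan p (mul_mem hm hf)

theorem invtSpan_le {p q : Submodule R V} (hpq : p ≤ q) (hq : q ∈ jointInvtSubmodule M) :
    invtSpan M p ≤ q :=
  iSup₂_le fun f hf => Submodule.map_le_iff_le_comap.mpr fun x hx =>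
    mem_jointInvtSubmodule.mp hq f hf x (hpq hx)

end Invariant

section Decomposition

variable {k V : Type*} [DivisionRing k] [AddCommGroup V] [Module k V]

def IsIrreducibleIn (L : Sublattice (Submodule k V)) (W : Submodule k V) : Prop :=
  W ≠ ⊥ ∧ ∀ W' ≤ W, W' ∈ L → W' = ⊥ ∨ W' = W

theorem exists_isIrreducibleIn_le (L : Sublattice (Submodule k V)) {X : Submodule k V}
    [FiniteDimensional k X] (hX : X ∈ L) (hX0 : X ≠ ⊥) :
    ∃ U ∈ L, U ≤ X ∧ IsIrreducibleIn L U := by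
  obtain ⟨U, ⟨hUL, hU0, hUX⟩, hmin⟩ :=
    (measure fun U : Submodule k V => Module.finrank k U).wf.has_min
      {U | U ∈ L ∧ U ≠ ⊥ ∧ U ≤ X} ⟨X, hX, hX0, le_rfl⟩
  have : FiniteDimensional k U := Submodule.finiteDimensional_of_le hUX
  refine ⟨U, hUL, hUX, hU0, fun W' hW'U hW'L => or_iff_not_imp_left.mpr fun hW'0 => ?_⟩
  exact Submodule.eq_of_le_of_finrank_le hW'U
    (not_lt.mp (hmin W' ⟨hW'L, hW'0, hW'U.trans hUX⟩))

theorem exists_finset_supIndep_isIrreducibleIn (L : Sublattice (Submodule k V))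
    {N : Submodule k V} [FiniteDimensional k N] (hN : N ∈ L)
    (hcompl : ∀ U ∈ L, U ≤ N → ∃ C ∈ L, C ≤ N ∧ U ⊓ C = ⊥ ∧ U ⊔ C = N) :
    ∃ s : Finset (Submodule k V),
      (∀ W ∈ s, W ∈ L ∧ IsIrreducibleIn L W) ∧ s.SupIndep id ∧ s.sup id = N := by
  classical
  suffices h : ∀ d, ∀ X ∈ L, X ≤ N → Module.finrank k X = d → ∃ s : Finset (Submodule k V),
      (∀ W ∈ s, W ∈ L ∧ IsIrreducibleIn L W) ∧ s.SupIndep id ∧ s.sup id = X from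
    h _ N hN le_rfl rfl
  intro d
  induction d using Nat.strong_induction_on with
  | _ d ih =>
  intro X hX hXN hd
  have : FiniteDimensional k X := Submodule.finiteDimensional_of_le hXN
  rcases eq_or_ne X ⊥ with rfl | hX0
  · exact ⟨∅, by simp, Finset.supIndep_empty _, rfl⟩
  obtain ⟨U, hUL, hUX, hUirr⟩ := exists_isIrreducibleIn_le L hX hX0
  obtain ⟨C, hCL, hCN, hinf, hsup⟩ := hcompl U hUL (hUX.trans hXN)
  have hdisj : Disjoint U (X ⊓ C) :=
    disjoint_iff.mpr (eq_bot_iff.mpr (hinf ▸ inf_le_inf_left U inf_le_right))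
  have hlt : X ⊓ C < X := inf_le_left.lt_of_ne fun h => hUirr.1 <|
    disjoint_self.mp ((h ▸ hdisj).mono_right hUX)
  obtain ⟨s, hs, hind, hsup'⟩ := ih _ (hd ▸ Submodule.finrank_lt_finrank_of_lt hlt) (X ⊓ C)
    (Sublattice.inf_mem hX hCL) (inf_le_left.trans hXN) rfl
  refine ⟨insert U s, ?_, hind.insert (by rwa [id, hsup']), ?_⟩
  · exact (Finset.forall_mem_insert _ _ _).mpr ⟨⟨hUL, hUirr⟩, hs⟩
  · rw [Finset.sup_insert, hsup', id, inf_comm, ← sup_inf_assoc_of_le C hUX, hsup,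
      inf_eq_right.mpr hXN]

end Decomposition

section Corner

open LinearMap (range)

variable {k V : Type*} [Field k] [AddCommGroup V] [Module k V]

/-- On `range e`, where an idempotent `e` is the identity, this is the corner element `e m e`. -/
def cornerMap (e m : Module.End k V) : Module.End k (range e) :=
  (e * m).restrict fun x _ => LinearMap.mem_range_self e (m x)

theorem coe_cornerMap_apply (e m : Module.End k V) (x : range e) :
    (cornerMap e m x : V) = e (m x) := rfl

theorem cornerMap_one {e : Module.End k V} (he : IsIdempotentElem e) : cornerMap e 1 = 1 := by
  ext ⟨x, hx⟩
  exact (LinearMap.IsIdempotentElem.mem_range_iff he).mp hx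

theorem cornerMap_mul (e m m' : Module.End k V) :
    cornerMap e m * cornerMap e m' = cornerMap e (m * e * m') := rfl

variable {M : Submonoid (Module.End k V)} {e : Module.End k V}

theorem isUnit_cornerMap [FiniteDimensional k V] (he : e ∈ M)
    (hmin : ∀ m ∈ M, m ≠ 0 → Module.finrank k (range e) ≤ Module.finrank k (range m))
    {m : Module.End k V} (hm : m ∈ M) (h0 : cornerMap e m ≠ 0) : IsUnit (cornerMap e m) := by
  have hemem : e * m * e ∈ M := mul_mem (mul_mem he hm) he
  have hne : e * m * e ≠ 0 := by
    contrapose! h0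
    ext ⟨_, y, rfl⟩
    exact DFunLike.congr_fun h0 y
  have hle : range (e * m * e) ≤ range e := by
    rw [mul_assoc, Module.End.mul_eq_comp]
    exact LinearMap.range_comp_le_range _ _
  have hrange := Submodule.eq_of_le_of_finrank_le hle (hmin _ hemem hne)
  rw [LinearMap.isUnit_iff_range_eq_top, eq_top_iff]
  rintro ⟨y, hy⟩ -
  obtain ⟨x, rfl⟩ := hrange ▸ hy
  exact ⟨⟨e x, LinearMap.mem_range_self e x⟩, rfl⟩

def cornerMonoid (M : Submonoid (Module.End k V)) (he : e ∈ M) (hidem : IsIdempotentElem e) :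
    Submonoid (Module.End k (range e))ˣ where
  carrier := {u | ∃ m ∈ M, (u : Module.End k (range e)) = cornerMap e m}
  one_mem' := ⟨1, M.one_mem, (cornerMap_one hidem).symm⟩
  mul_mem' := by
    rintro _ _ ⟨m, hm, hu⟩ ⟨m', hm', hv⟩
    refine ⟨m * e * m', mul_mem (mul_mem hm he) hm', ?_⟩
    rw [Units.val_mul, hu, hv, cornerMap_mul]

theorem finite_cornerMonoid (hM : (M : Set (Module.End k V)).Finite) (he : e ∈ M)
    (hidem : IsIdempotentElem e) :
    (cornerMonoid M he hidem : Set (Module.End k (range e))ˣ).Finite :=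
  ((hM.image (cornerMap e)).preimage Units.val_injective.injOn).subset
    fun _ ⟨m, hm, hu⟩ => ⟨m, hm, hu.symm⟩

def cornerGroup (hM : (M : Set (Module.End k V)).Finite) (he : e ∈ M)
    (hidem : IsIdempotentElem e) : Subgroup (Module.End k (range e))ˣ :=
  { cornerMonoid M he hidem with
    inv_mem' := Submonoid.inv_mem_of_finite _ (finite_cornerMonoid hM he hidem) }

theorem exists_cornerStable_compl [CharZero k] [FiniteDimensional k V]
    (hM : (M : Set (Module.End k V)).Finite) (he : e ∈ M) (hidem : IsIdempotentElem e)
    (hmin : ∀ m ∈ M, m ≠ 0 → Module.finrank k (range e) ≤ Module.finrank k (range m))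
    {Y : Submodule k V} (hYe : Y ≤ range e) (hY : ∀ m ∈ M, ∀ y ∈ Y, e (m y) ∈ Y) :
    ∃ Y' ≤ range e, (∀ m ∈ M, ∀ y ∈ Y', e (m y) ∈ Y') ∧ Y ⊓ Y' = ⊥ ∧ Y ⊔ Y' = range e := by
  set H := cornerGroup hM he hidem
  have : Finite H := (finite_cornerMonoid hM he hidem).to_subtype
  have : NeZero (Nat.card H : k) := ⟨Nat.cast_ne_zero.mpr Nat.card_pos.ne'⟩
  let ρ : Representation k H (range e) := (Units.coeHom _).comp H.subtype
  let σY : Subrepresentation ρ := ⟨Y.comap (range e).subtype, by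
    rintro ⟨u, m, hm, hu⟩ v hv
    change (u : Module.End k (range e)) v ∈ _
    rw [hu]
    exact hY m hm v hv⟩
  obtain ⟨τ, hτ⟩ := exists_isCompl σY
  have hYmap : Y = σY.toSubmodule.map (range e).subtype := by
    rw [Submodule.map_comap_subtype, inf_eq_right.mpr hYe]
  refine ⟨τ.toSubmodule.map (range e).subtype, Submodule.map_subtype_le _ _, ?_, ?_, ?_⟩
  · rintro m hm _ ⟨w, hw, rfl⟩
    change e (m w) ∈ _
    rcases eq_or_ne (cornerMap e m) 0 with h0 | h0
    · rw [← coe_cornerMap_apply, h0]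
      exact zero_mem _
    obtain ⟨u, hu⟩ := isUnit_cornerMap he hmin hm h0
    refine ⟨cornerMap e m w, ?_, rfl⟩
    rw [← hu]
    exact τ.apply_mem_toSubmodule ⟨u, m, hm, hu⟩ hw
  · rw [hYmap, ← Submodule.map_inf _ (range e).injective_subtype,
      ← Subrepresentation.toSubmodule_inf, hτ.inf_eq_bot]
    exact Submodule.map_bot _
  · rw [hYmap, ← Submodule.map_sup, ← Subrepresentation.toSubmodule_sup, hτ.sup_eq_top]
    exact Submodule.map_subtype_top _

theorem exists_isIdempotentElem_finrank_le (hM : (M : Set (Module.End k V)).Finite)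
    [FiniteDimensional k V] {g : Module.End k V} (hg : g ∈ M) {x : V} (hx : g x = x)
    (hx0 : x ≠ 0) : ∃ e ∈ M, IsIdempotentElem e ∧ e ≠ 0 ∧
      Module.finrank k (range e) ≤ Module.finrank k (range g) := by
  have : Finite M := hM.to_subtype
  obtain ⟨n, hn, hidem⟩ := exists_pow_isIdempotentElem (⟨g, hg⟩ : M)
  refine ⟨g ^ n, pow_mem hg n, by simpa using hidem.map M.subtype, fun h => hx0 ?_, ?_⟩
  · rw [← Function.iterate_fixed hx n, ← Module.End.pow_apply, h, LinearMap.zero_apply]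
  · rw [← pow_sub_one_mul hn, Module.End.mul_eq_comp, LinearMap.range_comp]
    exact Submodule.finrank_map_le _ _

theorem eq_bot_of_map_eq_bot (hdetect : ∀ x ≠ 0, ∃ m ∈ M, e (m x) ≠ 0) {X : Submodule k V}
    (hX : X ∈ jointInvtSubmodule M) (hXe : X.map e = ⊥) : X = ⊥ := by
  by_contra hne
  obtain ⟨x, hx, hx0⟩ := Submodule.exists_mem_ne_zero_of_ne_bot hne
  obtain ⟨m, hm, hem⟩ := hdetect x hx0
  exact hem ((Submodule.mem_bot k).mp <|
    hXe ▸ Submodule.mem_map_of_mem (mem_jointInvtSubmodule.mp hX m hm x hx))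

theorem exists_isCompl_of_isIdempotentElem [CharZero k] [FiniteDimensional k V]
    (hM : (M : Set (Module.End k V)).Finite) (he : e ∈ M) (hidem : IsIdempotentElem e)
    (hmin : ∀ m ∈ M, m ≠ 0 → Module.finrank k (range e) ≤ Module.finrank k (range m))
    (hgen : invtSpan M (range e) = ⊤) (hdetect : ∀ x ≠ 0, ∃ m ∈ M, e (m x) ≠ 0)
    {U : Submodule k V} (hU : U ∈ jointInvtSubmodule M) :
    ∃ C ∈ jointInvtSubmodule M, IsCompl U C := by
  have hUinv := mem_jointInvtSubmodule.mp hU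
  have hYU : U.map e ≤ U := Submodule.map_le_iff_le_comap.mpr fun x hx => hUinv e he x hx
  have hYstab : ∀ m ∈ M, ∀ y ∈ U.map e, e (m y) ∈ U.map e := by
    rintro m hm _ ⟨x, hx, rfl⟩
    exact ⟨m (e x), hUinv m hm _ (hUinv e he x hx), rfl⟩
  obtain ⟨Y', -, hY'stab, hinf, hsup⟩ :=
    exists_cornerStable_compl hM he hidem hmin (LinearMap.map_le_range) hYstab
  have hcompress : (invtSpan M Y').map e ≤ Y' := Submodule.map_le_iff_le_comap.mpr <|
    iSup₂_le fun m hm => Submodule.map_le_iff_le_comap.mpr fun y hy => hY'stab m hm y hy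
  have hC := invtSpan_mem (M := M) Y'
  refine ⟨invtSpan M Y', hC, disjoint_iff.mpr ?_, codisjoint_iff.mpr ?_⟩
  · refine eq_bot_of_map_eq_bot hdetect (Sublattice.inf_mem hU hC) (eq_bot_iff.mpr ?_)
    exact hinf ▸ le_inf (Submodule.map_mono inf_le_left)
      ((Submodule.map_mono inf_le_right).trans hcompress)
  · exact top_unique <| hgen ▸
      invtSpan_le (hsup ▸ sup_le_sup hYU (le_invtSpan Y')) (Sublattice.sup_mem hU hC)

end Corner

section Syntactic

variable {A : Type*}

theorem shiftOp_shiftOp (u w : List A) (τ : List A → ℚ) :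
    shiftOp w (shiftOp u τ) = shiftOp (u ++ w) τ := by
  funext v
  simp [shiftOp, List.append_assoc]

theorem shiftOp_mem_synSpace (σ : List A → ℚ) (u : List A) {τ : List A → ℚ}
    (hτ : τ ∈ synSpace σ) : shiftOp u τ ∈ synSpace σ := by
  refine (Submodule.span_le (p := (synSpace σ).comap (shiftOp u))).mpr ?_ hτ
  rintro _ ⟨w, rfl⟩
  exact Submodule.subset_span ⟨w ++ u, (shiftOp_shiftOp w u σ).symm⟩

theorem apply_eq_zero_of_forall {σ : List A → ℚ} {t : List A} (h : ∀ u, σ (u ++ t) = 0)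
    {τ : List A → ℚ} (hτ : τ ∈ synSpace σ) : τ t = 0 := by
  induction hτ using Submodule.span_induction with
  | mem _ hx => obtain ⟨u, rfl⟩ := hx; exact h u
  | zero => rfl
  | add _ _ _ _ h₁ h₂ => simp only [Pi.add_apply, h₁, h₂, add_zero]
  | smul c _ _ h₁ => simp only [Pi.smul_apply, h₁, smul_zero]

theorem apply_eq_of_forall {σ : List A → ℚ} {t t' : List A}
    (h : ∀ u, σ (u ++ t) = σ (u ++ t')) {τ : List A → ℚ} (hτ : τ ∈ synSpace σ) :
    τ t = τ t' := by
  induction hτ using Submodule.span_induction with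
  | mem _ hx => obtain ⟨u, rfl⟩ := hx; exact h u
  | zero => rfl
  | add _ _ _ _ h₁ h₂ => simp only [Pi.add_apply, h₁, h₂]
  | smul c _ _ h₁ => simp only [Pi.smul_apply, h₁]

def synRep (σ : List A → ℚ) (u : List A) : Module.End ℚ (synSpace σ) :=
  (shiftOp u).restrict fun _ => shiftOp_mem_synSpace σ u

theorem coe_synRep_apply (σ : List A → ℚ) (u : List A) (x : synSpace σ) :
    (synRep σ u x : List A → ℚ) = shiftOp u x := rfl

theorem synRep_append (σ : List A → ℚ) (u w : List A) :
    synRep σ (u ++ w) = synRep σ w * synRep σ u := by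
  ext x : 1
  exact Subtype.ext (shiftOp_shiftOp u w x).symm

theorem synRep_nil (σ : List A → ℚ) : synRep σ [] = 1 := rfl

def synMonoid (σ : List A → ℚ) : Submonoid (Module.End ℚ (synSpace σ)) where
  carrier := Set.range (synRep σ)
  mul_mem' := by
    rintro _ _ ⟨u, rfl⟩ ⟨w, rfl⟩
    exact ⟨w ++ u, synRep_append σ w u⟩
  one_mem' := ⟨[], synRep_nil σ⟩

theorem synRep_mem_synMonoid (σ : List A → ℚ) (u : List A) : synRep σ u ∈ synMonoid σ :=
  ⟨u, rfl⟩

/-- The series `σ · u`; for `σ = charFun S` it is the indicator of `u⁻¹S`, i.e. the state of the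
minimal automaton of `S` reached by `u`. -/
def state (σ : List A → ℚ) (u : List A) : synSpace σ :=
  ⟨shiftOp u σ, Submodule.subset_span ⟨u, rfl⟩⟩

theorem synRep_state (σ : List A → ℚ) (u w : List A) :
    synRep σ w (state σ u) = state σ (u ++ w) :=
  Subtype.ext (shiftOp_shiftOp u w σ)

theorem span_range_state (σ : List A → ℚ) : Submodule.span ℚ (Set.range (state σ)) = ⊤ := by
  refine Submodule.map_injective_of_injective (synSpace σ).injective_subtype ?_
  rw [Submodule.map_span, Submodule.map_top, Submodule.range_subtype, ← Set.range_comp]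
  rfl

theorem synRep_eq_of_state_eq {σ : List A → ℚ} {w w' : List A}
    (h : ∀ u, state σ (u ++ w) = state σ (u ++ w')) : synRep σ w = synRep σ w' :=
  LinearMap.ext_on (span_range_state σ) (by rintro _ ⟨u, rfl⟩; simp only [synRep_state, h u])

theorem exists_state_ne_zero {σ : List A → ℚ} {w : List A} (h : synRep σ w ≠ 0) :
    ∃ u, state σ (u ++ w) ≠ 0 := by
  by_contra! h'
  exact h (LinearMap.ext_on (span_range_state σ)
    (by rintro _ ⟨u, rfl⟩; simp only [synRep_state, h' u, LinearMap.zero_apply]))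

theorem invariantSub_iff_mem {W : Submodule ℚ (List A → ℚ)} :
    InvariantSub W ↔ W ∈ jointInvtSubmodule (Set.range (shiftOp (A := A))) := by
  rw [mem_jointInvtSubmodule, Set.forall_mem_range]
  exact ⟨fun h u x hx => h x hx u, fun h x hx u => h u x hx⟩

theorem exists_relCompl_of_isCompl {σ : List A → ℚ}
    (h : ∀ U : Submodule ℚ (synSpace σ), U ∈ jointInvtSubmodule (synMonoid σ) →
      ∃ C ∈ jointInvtSubmodule (synMonoid σ), IsCompl U C)
    {U : Submodule ℚ (List A → ℚ)} (hU : InvariantSub U) (hUN : U ≤ synSpace σ) :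
    ∃ C, InvariantSub C ∧ C ≤ synSpace σ ∧ U ⊓ C = ⊥ ∧ U ⊔ C = synSpace σ := by
  set N := synSpace σ
  obtain ⟨C, hC, hcompl⟩ := h (U.comap N.subtype) <| mem_jointInvtSubmodule.mpr <| by
    rintro _ ⟨u, rfl⟩ x hx
    exact hU _ hx u
  have hUmap : U = (U.comap N.subtype).map N.subtype := by
    rw [Submodule.map_comap_subtype, inf_eq_right.mpr hUN]
  refine ⟨C.map N.subtype, ?_, Submodule.map_subtype_le _ _, ?_, ?_⟩
  · rintro _ ⟨x, hx, rfl⟩ u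
    exact ⟨synRep σ u x, mem_jointInvtSubmodule.mp hC _ ⟨u, rfl⟩ x hx, rfl⟩
  · rw [hUmap, ← Submodule.map_inf _ N.injective_subtype, hcompl.inf_eq_bot, Submodule.map_bot]
  · rw [hUmap, ← Submodule.map_sup, hcompl.sup_eq_top, Submodule.map_subtype_top]

theorem completelyReducibleSeries_of_relCompl {σ : List A → ℚ}
    [FiniteDimensional ℚ (synSpace σ)]
    (hcompl : ∀ U, InvariantSub U → U ≤ synSpace σ →
      ∃ C, InvariantSub C ∧ C ≤ synSpace σ ∧ U ⊓ C = ⊥ ∧ U ⊔ C = synSpace σ) :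
    CompletelyReducibleSeries σ := by
  obtain ⟨s, hs, hind, hsup⟩ := exists_finset_supIndep_isIrreducibleIn _
    (invariantSub_iff_mem.mp fun _ hτ u => shiftOp_mem_synSpace σ u hτ) fun U hU hUN => by
      obtain ⟨C, hC, hCN, hinf, hsup⟩ := hcompl U (invariantSub_iff_mem.mpr hU) hUN
      exact ⟨C, invariantSub_iff_mem.mp hC, hCN, hinf, hsup⟩
  refine ⟨s.card, fun i => s.equivFin.symm i, fun i => ?_, ?_, ?_⟩
  · obtain ⟨hWL, hW0, hWirr⟩ := hs _ (s.equivFin.symm i).2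
    refine ⟨hsup ▸ Finset.le_sup (f := id) (s.equivFin.symm i).2, invariantSub_iff_mem.mpr hWL,
      hW0, fun W' hle hW' => hWirr W' hle (invariantSub_iff_mem.mp hW')⟩
  · exact (iSupIndep_comp_coe_iff_supIndep.mpr hind).comp s.equivFin.symm.injective
  · rw [← hsup, Finset.sup_eq_iSup, iSup_subtype']
    exact s.equivFin.symm.iSup_comp (g := fun x : s => (x : Submodule ℚ (List A → ℚ)))

end Syntactic

section Language

open LinearMap (range)

variable {A : Type*} {S : Set (List A)}

theorem leftQuot_append (S : Set (List A)) (u w : List A) :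
    leftQuot S (u ++ w) = leftQuot (leftQuot S u) w := by
  ext v
  simp [leftQuot, List.append_assoc]

theorem nonempty_of_nonempty_leftQuot {u : List A} (h : (leftQuot S u).Nonempty) : S.Nonempty :=
  let ⟨v, hv⟩ := h
  ⟨u ++ v, hv⟩

theorem charFun_apply_eq {a b : List A} (h : a ∈ S ↔ b ∈ S) : charFun S a = charFun S b := by
  classical
  simp only [charFun, Set.indicator_apply]
  exact if_congr h rfl rfl

theorem state_charFun_eq {u u' : List A} (h : leftQuot S u = leftQuot S u') :
    state (charFun S) u = state (charFun S) u' :=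
  Subtype.ext (congrArg charFun h)

theorem state_charFun_ne_zero_iff {u : List A} :
    state (charFun S) u ≠ 0 ↔ (leftQuot S u).Nonempty := by
  rw [ne_eq, ← Submodule.coe_eq_zero, Set.nonempty_iff_ne_empty, not_iff_not]
  change charFun (leftQuot S u) = 0 ↔ _
  rw [charFun, Set.indicator_eq_zero']
  simp

theorem finiteDimensional_synSpace (hS : Recognizable S) :
    FiniteDimensional ℚ (synSpace (charFun S)) := by
  have h : Set.range (fun u => shiftOp u (charFun S)) = charFun '' Set.range (leftQuot S) := by
    rw [← Set.range_comp]
    rfl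
  unfold synSpace
  rw [h]
  exact FiniteDimensional.span_of_finite ℚ (hS.image charFun)

theorem finite_synMonoid (hS : Recognizable S) :
    (synMonoid (charFun S) : Set (Module.End ℚ (synSpace (charFun S)))).Finite := by
  set Q := Set.range (leftQuot S)
  have : Finite Q := hS.to_subtype
  let Φ : List A → Q → Q := fun w q => ⟨leftQuot q w, by
    obtain ⟨u, hu⟩ := q.2
    exact ⟨u ++ w, by rw [leftQuot_append, hu]⟩⟩
  have hΦ : ∀ w w', Φ w = Φ w' → synRep (charFun S) w = synRep (charFun S) w' :=
    fun w w' h => synRep_eq_of_state_eq fun u => state_charFun_eq <| by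
      rw [leftQuot_append, leftQuot_append]
      exact congrArg Subtype.val (congrFun h ⟨_, u, rfl⟩)
  refine (Set.finite_range (synRep (charFun S) ∘ Function.invFun Φ)).subset ?_
  rintro _ ⟨w, rfl⟩
  exact ⟨Φ w, hΦ _ _ (Function.invFun_eq ⟨w, rfl⟩)⟩

theorem exists_append_mem_iff_of_recurrent_langRev (hS : Recurrent (langRev S))
    {t t' : List A} (ht : ∃ u, u ++ t ∈ S) (ht' : ∃ u, u ++ t' ∈ S) :
    ∃ w, ∀ u, u ++ (w ++ t) ∈ S ↔ u ++ t' ∈ S := by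
  obtain ⟨u, hu⟩ := ht
  obtain ⟨u', hu'⟩ := ht'
  obtain ⟨w, hw⟩ := hS.2 t.reverse t'.reverse
    ⟨u.reverse, by simpa [leftQuot, langRev] using hu⟩
    ⟨u'.reverse, by simpa [leftQuot, langRev] using hu'⟩
  exact ⟨w.reverse, fun v => by simpa [leftQuot, langRev] using Set.ext_iff.mp hw v.reverse⟩

theorem invtSpan_range_synRep_eq_top (hS : Recurrent S) {z : List A}
    (hz : synRep (charFun S) z ≠ 0) :
    invtSpan (synMonoid (charFun S)) (range (synRep (charFun S) z)) = ⊤ := by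
  obtain ⟨t, ht⟩ := exists_state_ne_zero hz
  rw [eq_top_iff, ← span_range_state, Submodule.span_le]
  rintro _ ⟨v, rfl⟩
  by_cases hv : (leftQuot S v).Nonempty
  · obtain ⟨w, hw⟩ := hS.2 (t ++ z) v (state_charFun_ne_zero_iff.mp ht) hv
    have hstate : state (charFun S) v = synRep _ w (synRep _ z (state _ t)) := by
      rw [synRep_state, synRep_state]
      exact state_charFun_eq hw.symm
    rw [hstate]
    exact map_le_invtSpan _ (synRep_mem_synMonoid _ w)
      (Submodule.mem_map_of_mem (LinearMap.mem_range_self _ _))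
  · rw [not_not.mp (mt state_charFun_ne_zero_iff.mp hv)]
    exact zero_mem _

theorem exists_synRep_ne_zero (hS : Birecurrent S) {z : List A} (hz : synRep (charFun S) z ≠ 0)
    {x : synSpace (charFun S)} (hx : x ≠ 0) :
    ∃ m ∈ synMonoid (charFun S), synRep (charFun S) z (m x) ≠ 0 := by
  obtain ⟨t₀, ht₀⟩ := exists_state_ne_zero hz
  obtain ⟨v₀, hv₀⟩ := state_charFun_ne_zero_iff.mp ht₀
  obtain ⟨t, ht⟩ : ∃ t, (x : List A → ℚ) t ≠ 0 := by
    by_contra! h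
    exact hx (Subtype.ext (funext h))
  have hSt : ∃ u, u ++ t ∈ S := by
    by_contra! h
    exact ht (apply_eq_zero_of_forall (fun u => Set.indicator_of_notMem (h u) _) x.2)
  obtain ⟨w, hw⟩ := exists_append_mem_iff_of_recurrent_langRev hS.2 (t := z ++ v₀)
    ⟨t₀, by simpa [leftQuot] using hv₀⟩ hSt
  refine ⟨synRep _ w, synRep_mem_synMonoid _ w, fun h => ht ?_⟩
  rw [← apply_eq_of_forall (fun u => charFun_apply_eq (hw u)) x.2]
  have hv₀ := congrArg (fun y : synSpace (charFun S) => (y : List A → ℚ) v₀) h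
  simpa [coe_synRep_apply, shiftOp] using hv₀

theorem exists_minimal_idempotent (hS : Recurrent S) [Nontrivial (synSpace (charFun S))] :
    ∃ z, IsIdempotentElem (synRep (charFun S) z) ∧ synRep (charFun S) z ≠ 0 ∧
      ∀ m ∈ synMonoid (charFun S), m ≠ 0 →
        Module.finrank ℚ (range (synRep (charFun S) z)) ≤ Module.finrank ℚ (range m) := by
  have := finiteDimensional_synSpace hS.1
  have hM := finite_synMonoid hS.1
  obtain ⟨_, ⟨⟨w₀, rfl⟩, hw₀⟩, hmin⟩ :=
    Set.exists_min_image {m | m ∈ synMonoid (charFun S) ∧ m ≠ 0}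
      (fun m => Module.finrank ℚ (range m)) (hM.subset fun _ h => h.1)
      ⟨1, one_mem _, one_ne_zero⟩
  obtain ⟨t, ht⟩ := exists_state_ne_zero hw₀
  have ht' := state_charFun_ne_zero_iff.mp ht
  have htS : (leftQuot S t).Nonempty := by
    rw [leftQuot_append] at ht'
    exact nonempty_of_nonempty_leftQuot ht'
  obtain ⟨w₁, hw₁⟩ := hS.2 (t ++ w₀) t ht' htS
  have hfix : synRep _ (w₀ ++ w₁) (state (charFun S) t) = state _ t := by
    rw [synRep_state, ← List.append_assoc]
    exact state_charFun_eq hw₁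
  obtain ⟨_, ⟨z, rfl⟩, hidem, hz0, hrank⟩ := exists_isIdempotentElem_finrank_le hM
    (synRep_mem_synMonoid _ (w₀ ++ w₁)) hfix (state_charFun_ne_zero_iff.mpr htS)
  refine ⟨z, hidem, hz0, fun m hm hm0 => hrank.trans (le_trans ?_ (hmin m ⟨hm, hm0⟩))⟩
  rw [synRep_append, Module.End.mul_eq_comp, LinearMap.range_comp]
  exact Submodule.finrank_map_le _ _

theorem exists_isCompl_of_birecurrent (hS : Birecurrent S)
    {U : Submodule ℚ (synSpace (charFun S))}
    (hU : U ∈ jointInvtSubmodule (synMonoid (charFun S))) :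
    ∃ C ∈ jointInvtSubmodule (synMonoid (charFun S)), IsCompl U C := by
  have := finiteDimensional_synSpace hS.1.1
  cases subsingleton_or_nontrivial (synSpace (charFun S))
  · exact ⟨U, hU, isCompl_iff.mpr
      ⟨disjoint_iff.mpr (Subsingleton.elim _ _), codisjoint_iff.mpr (Subsingleton.elim _ _)⟩⟩
  obtain ⟨z, hidem, hz0, hmin⟩ := exists_minimal_idempotent hS.1
  exact exists_isCompl_of_isIdempotentElem (finite_synMonoid hS.1.1) (synRep_mem_synMonoid _ z)
    hidem hmin (invtSpan_range_synRep_eq_top hS.1 hz0)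
    (fun _ hx => exists_synRep_ne_zero hS hz0 hx) hU

end Language

end Birec

open Birec

theorem birecurrent_completelyReducible_general {A : Type*} (S : Set (List A))
    (hS : Birecurrent S) :
    CompletelyReducibleLang S := by
  have := finiteDimensional_synSpace hS.1.1
  exact completelyReducibleSeries_of_relCompl fun U hU hUN =>
    exists_relCompl_of_isCompl (fun _ hU => exists_isCompl_of_birecurrent hS hU) hU hUN

/-- **Corollary.** Any recognizable birecurrent set is completely reducible over `ℚ`:
the syntactic representation of its characteristic series is a direct sum of
irreducible representations. -/
theorem birecurrent_completelyReducible {A : Type*} [Fintype A] (S : Set (List A))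
    (hS : Birecurrent S) :
    CompletelyReducibleLang S :=
  birecurrent_completelyReducible_general S hS
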